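/- arXiv:math/9808049 — 3 statements merged into one kernel-verified Lean document; each statement's English description precedes it below -/
import Mathlib

section
/- If U_1 ~ Geometric(p) and S_0 ~ Binomial(s, θ), then the p.g.f. G_{s,θ}(z) = E[z^T] satisfies G_{s,θ}(z) = z{G_{s,θq}(z) + (1 - θp)^s [1 - G_{s, θq/(1-θp)}(z)]}, where q = 1 - p. -/
/-!
Write `T(J, a)` for the first `n ≥ 1` at which no client of `J` answers at time `a + n`. On the
event that no client of `J` has answered by time `a`, split according to the set `L` of clients
still silent after time `a + 1`: if `L = J` then `T(J, a) = 1`, otherwise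
`T(J, a) = T(L, a + 1) + 1`, and the answers of `J \ L` are independent of everything `L` does.
By memorylessness of the geometric law, induction on `|J|` gives
`E[z ^ T(J, a); U > a on J] = q ^ (a |J|) g_{|J|}`, where `g` solves
`g_r = z (q ^ r + ∑_{k<r} C(r,k) q ^ k p ^ (r-k) g_k)`.

Averaging this recursion over `S_0 ~ Binomial(s, θ)`, the sum over `k ≤ r` becomes `G_{s,θq}`
because a `Binomial(r, q)` thinning of a `Binomial(s, θ)` count is `Binomial(s, θ q)`; the
remaining weights `(θ q) ^ k (1 - θ) ^ (s - k)` are those of `Binomial(s, θ q / (1 - θ p))`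
rescaled by `(1 - θ p) ^ s`.
-/

open MeasureTheory ProbabilityTheory Finset

section GapTime

variable {ι : Type*}

noncomputable def gapTime (u : ι → ℕ) (a : ℕ) (J : Finset ι) : ℕ :=
  sInf {n | 1 ≤ n ∧ ∀ i ∈ J, u i ≠ a + n}

/-- Pigeonhole: the `|J|` values `u i - a` cannot cover `1, …, |J| + 1`. -/
lemma exists_gap_le_card_add_one (u : ι → ℕ) (a : ℕ) (J : Finset ι) :
    ∃ n ≤ J.card + 1, 1 ≤ n ∧ ∀ i ∈ J, u i ≠ a + n := by
  have hcard : ¬ Icc 1 (J.card + 1) ⊆ J.image (fun i => u i - a) := fun hsub => by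
    have := (card_le_card hsub).trans card_image_le
    simp at this
  obtain ⟨n, hn, hnu⟩ := not_subset.mp hcard
  rw [mem_Icc] at hn
  exact ⟨n, hn.2, hn.1, fun i hi hui => hnu (mem_image.mpr ⟨i, hi, by omega⟩)⟩

lemma gapTime_spec (u : ι → ℕ) (a : ℕ) (J : Finset ι) :
    1 ≤ gapTime u a J ∧ ∀ i ∈ J, u i ≠ a + gapTime u a J := by
  obtain ⟨n, -, hn⟩ := exists_gap_le_card_add_one u a J
  exact Nat.sInf_mem (s := {n | 1 ≤ n ∧ ∀ i ∈ J, u i ≠ a + n}) ⟨n, hn⟩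

lemma gapTime_le_card_add_one (u : ι → ℕ) (a : ℕ) (J : Finset ι) :
    gapTime u a J ≤ J.card + 1 := by
  obtain ⟨n, hnJ, hn⟩ := exists_gap_le_card_add_one u a J
  exact (Nat.sInf_le hn).trans hnJ

lemma gapTime_congr {u v : ι → ℕ} {J : Finset ι} (h : ∀ i ∈ J, u i = v i) (a : ℕ) :
    gapTime u a J = gapTime v a J := by
  simp +contextual only [gapTime, h]

lemma gapTime_eq_one {u : ι → ℕ} {a : ℕ} {J : Finset ι} (h : ∀ i ∈ J, u i ≠ a + 1) :
    gapTime u a J = 1 :=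
  le_antisymm (Nat.sInf_le ⟨le_rfl, h⟩) (gapTime_spec u a J).1

lemma gapTime_eq_gapTime_add_one [DecidableEq ι] {u : ι → ℕ} {a : ℕ} {J L : Finset ι} (hLJ : L ⊂ J)
    (h : ∀ i ∈ J \ L, u i = a + 1) : gapTime u a J = gapTime u (a + 1) L + 1 := by
  obtain ⟨j, hj⟩ := sdiff_nonempty.mpr (not_subset_of_ssubset hLJ)
  have hshift : {m | 1 ≤ m + 1 ∧ ∀ i ∈ J, u i ≠ a + (m + 1)}
      = {m | 1 ≤ m ∧ ∀ i ∈ L, u i ≠ a + 1 + m} := by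
    ext m
    simp only [Set.mem_ofPred_eq]
    constructor
    · rintro ⟨-, hm⟩
      refine ⟨Nat.one_le_iff_ne_zero.mpr fun hm0 => hm j (mem_sdiff.mp hj).1 ?_,
        fun i hi => by have := hm i (hLJ.subset hi); omega⟩
      rw [h j hj, hm0]
    · rintro ⟨hm1, hm⟩
      refine ⟨by omega, fun i hi => ?_⟩
      by_cases hiL : i ∈ L
      · have := hm i hiL; omega
      · rw [h i (mem_sdiff.mpr ⟨hi, hiL⟩)]; omega
  rw [gapTime, ← Nat.sInf_add (gapTime_spec u a J).1, gapTime, hshift]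

end GapTime

section Independence

variable {Ω ι : Type*} [MeasurableSpace Ω] {μ : Measure Ω} {U : ι → Ω → ℕ}

lemma DependsOn.exists_eq_comp_restrict {α β : Type*} [Inhabited α] {Φ : (ι → α) → β}
    {K : Finset ι} (hΦ : DependsOn Φ K) : ∃ φ : (K → α) → β, ∀ u, Φ u = φ (K.restrict u) := by
  classical
  refine ⟨fun v => Φ fun i => if h : i ∈ K then v ⟨i, h⟩ else default, fun u => hΦ ?_⟩
  intro i hi
  simp [mem_coe.mp hi]

lemma measurable_comp_of_dependsOn {β : Type*} [MeasurableSpace β] (hUm : ∀ i, Measurable (U i))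
    {K : Finset ι} {Φ : (ι → ℕ) → β} (hΦ : DependsOn Φ K) :
    Measurable fun ω => Φ fun i => U i ω := by
  obtain ⟨φ, hφ⟩ := hΦ.exists_eq_comp_restrict
  simp only [hφ]
  exact Measurable.of_discrete.comp (measurable_pi_lambda _ fun i => hUm i)

lemma measurableSet_of_dependsOn (hUm : ∀ i, Measurable (U i)) {K : Finset ι}
    {P : (ι → ℕ) → Prop} (hP : DependsOn P K) : MeasurableSet {ω | P fun i => U i ω} :=
  measurableSet_setOfPred.mpr (measurable_comp_of_dependsOn hUm hP)

lemma integral_mul_of_dependsOn_disjoint (hUm : ∀ i, Measurable (U i)) (hindep : iIndepFun U μ)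
    {K L : Finset ι} (hKL : Disjoint K L) {Φ Ψ : (ι → ℕ) → ℝ} (hΦ : DependsOn Φ K)
    (hΨ : DependsOn Ψ L) :
    ∫ ω, Φ (fun i => U i ω) * Ψ (fun i => U i ω) ∂μ
      = (∫ ω, Φ fun i => U i ω ∂μ) * ∫ ω, Ψ fun i => U i ω ∂μ := by
  obtain ⟨φ, hφ⟩ := hΦ.exists_eq_comp_restrict
  obtain ⟨ψ, hψ⟩ := hΨ.exists_eq_comp_restrict
  simp only [hφ, hψ]
  have hX : Measurable fun ω => K.restrict fun i => U i ω := measurable_pi_lambda _ fun i => hUm i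
  have hY : Measurable fun ω => L.restrict fun i => U i ω := measurable_pi_lambda _ fun i => hUm i
  exact ((hindep.indepFun_finset K L hKL hUm).comp Measurable.of_discrete Measurable.of_discrete
    ).integral_mul_eq_mul_integral (Measurable.of_discrete.comp hX).aestronglyMeasurable
    (Measurable.of_discrete.comp hY).aestronglyMeasurable

lemma measureReal_forall_mem_eq_prod (hindep : iIndepFun U μ) (K : Finset ι) (S : Set ℕ) :
    μ.real {ω | ∀ i ∈ K, U i ω ∈ S} = ∏ i ∈ K, μ.real {ω | U i ω ∈ S} := by
  have hS : {ω | ∀ i ∈ K, U i ω ∈ S} = ⋂ i ∈ K, U i ⁻¹' S := by ext; simp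
  rw [measureReal_def, hS, hindep.measure_inter_preimage_eq_mul K fun _ _ => .of_discrete,
    ENNReal.toReal_prod]
  rfl

lemma dependsOn_forall_mem {K : Finset ι} (P : ℕ → Prop) :
    DependsOn (fun u : ι → ℕ => ∀ i ∈ K, P (u i)) K := fun u v h => by
  simp +contextual [fun i hi => h i hi]

end Independence

section FirstStep

variable {Ω ι : Type*} [MeasurableSpace Ω] {μ : Measure Ω} {U : ι → Ω → ℕ}

lemma dependsOn_indicator {K : Finset ι} {P : (ι → ℕ) → Prop} {f : (ι → ℕ) → ℝ}
    (hP : DependsOn P K) (hf : DependsOn f K) : DependsOn ({u | P u}.indicator f) K :=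
  fun u v h => by
    by_cases hu : P u
    · rw [Set.indicator_of_mem (s := {u | P u}) hu,
        Set.indicator_of_mem (s := {u | P u}) (show P v from hP h ▸ hu), hf h]
    · rw [Set.indicator_of_notMem (s := {u | P u}) hu,
        Set.indicator_of_notMem (s := {u | P u}) (show ¬P v from hP h ▸ hu)]

lemma dependsOn_pow_gapTime (z : ℝ) (a : ℕ) (K : Finset ι) :
    DependsOn (fun u => z ^ gapTime u a K) K :=
  fun _ _ h => congrArg (z ^ ·) (gapTime_congr h a)

lemma setIntegral_pow_gapTime_of_ssubset [DecidableEq ι] (hUm : ∀ i, Measurable (U i))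
    (hindep : iIndepFun U μ) (z : ℝ) (a : ℕ) {J L : Finset ι} (hLJ : L ⊂ J) :
    ∫ ω in {ω | (∀ i ∈ J \ L, U i ω = a + 1) ∧ ∀ i ∈ L, a + 1 < U i ω},
        z ^ gapTime (fun i => U i ω) a J ∂μ
      = z * (μ.real {ω | ∀ i ∈ J \ L, U i ω = a + 1} *
          ∫ ω in {ω | ∀ i ∈ L, a + 1 < U i ω}, z ^ gapTime (fun i => U i ω) (a + 1) L ∂μ) := by
  set D := {ω | (∀ i ∈ J \ L, U i ω = a + 1) ∧ ∀ i ∈ L, a + 1 < U i ω}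
  set A := {u : ι → ℕ | ∀ i ∈ J \ L, u i = a + 1}
  set B := {u : ι → ℕ | ∀ i ∈ L, a + 1 < u i}
  have hA : DependsOn (A.indicator 1) ↑(J \ L) :=
    dependsOn_indicator (dependsOn_forall_mem (· = a + 1)) fun _ _ _ => rfl
  have hB : DependsOn (B.indicator fun u => z ^ gapTime u (a + 1) L) L :=
    dependsOn_indicator (dependsOn_forall_mem (a + 1 < ·)) (dependsOn_pow_gapTime z (a + 1) L)
  have hsplit : ∀ ω, D.indicator (fun ω => z ^ gapTime (fun i => U i ω) a J) ω
        = z * (A.indicator 1 (fun i => U i ω) *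
            B.indicator (fun u => z ^ gapTime u (a + 1) L) fun i => U i ω) := by
    intro ω
    by_cases hωA : ∀ i ∈ J \ L, U i ω = a + 1
    · by_cases hωB : ∀ i ∈ L, a + 1 < U i ω
      · rw [Set.indicator_of_mem (show ω ∈ D from ⟨hωA, hωB⟩),
          Set.indicator_of_mem (show (fun i => U i ω) ∈ A from hωA),
          Set.indicator_of_mem (show (fun i => U i ω) ∈ B from hωB),
          gapTime_eq_gapTime_add_one hLJ hωA, Pi.one_apply, pow_succ]
        ring
      · rw [Set.indicator_of_notMem (show ω ∉ D from fun h => hωB h.2),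
          Set.indicator_of_notMem (show (fun i => U i ω) ∉ B from hωB), mul_zero, mul_zero]
    · rw [Set.indicator_of_notMem (show ω ∉ D from fun h => hωA h.1),
        Set.indicator_of_notMem (show (fun i => U i ω) ∉ A from hωA), zero_mul, mul_zero]
  have hmA : MeasurableSet {ω | ∀ i ∈ J \ L, U i ω = a + 1} :=
    measurableSet_of_dependsOn hUm (dependsOn_forall_mem (· = a + 1))
  have hmB : MeasurableSet {ω | ∀ i ∈ L, a + 1 < U i ω} :=
    measurableSet_of_dependsOn hUm (dependsOn_forall_mem (a + 1 < ·))
  rw [← integral_indicator (show MeasurableSet D from hmA.inter hmB), funext hsplit,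
    integral_const_mul, integral_mul_of_dependsOn_disjoint hUm hindep sdiff_disjoint hA hB,
    ← integral_indicator_one hmA, ← integral_indicator hmB]
  rfl

lemma integrable_pow_gapTime [IsFiniteMeasure μ] (hUm : ∀ i, Measurable (U i)) (z : ℝ) (a : ℕ)
    (J : Finset ι) : Integrable (fun ω => z ^ gapTime (fun i => U i ω) a J) μ := by
  refine .of_bound
    (measurable_comp_of_dependsOn hUm (dependsOn_pow_gapTime z a J)).aestronglyMeasurable (max 1 |z| ^ (J.card + 1)) (ae_of_all _ fun ω => ?_)
  calc ‖z ^ gapTime (fun i => U i ω) a J‖ = |z| ^ gapTime (fun i => U i ω) a J := by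
        rw [norm_pow, Real.norm_eq_abs]
    _ ≤ max 1 |z| ^ gapTime (fun i => U i ω) a J :=
        pow_le_pow_left₀ (abs_nonneg z) (le_max_right _ _) _
    _ ≤ max 1 |z| ^ (J.card + 1) :=
        pow_le_pow_right₀ (le_max_left _ _) (gapTime_le_card_add_one _ a J)

/-- First-step analysis: `L` is the set of clients still silent at time `a + 1`. -/
lemma setIntegral_pow_gapTime_eq [IsFiniteMeasure μ] [DecidableEq ι]
    (hUm : ∀ i, Measurable (U i)) (hindep : iIndepFun U μ) (z : ℝ) (a : ℕ) (J : Finset ι) :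
    ∫ ω in {ω | ∀ i ∈ J, a < U i ω}, z ^ gapTime (fun i => U i ω) a J ∂μ
      = z * (μ.real {ω | ∀ i ∈ J, a + 1 < U i ω} + ∑ L ∈ J.ssubsets,
          μ.real {ω | ∀ i ∈ J \ L, U i ω = a + 1} *
            ∫ ω in {ω | ∀ i ∈ L, a + 1 < U i ω}, z ^ gapTime (fun i => U i ω) (a + 1) L ∂μ) := by
  set D : Finset ι → Set Ω := fun L => {ω | (∀ i ∈ J \ L, U i ω = a + 1) ∧ ∀ i ∈ L, a + 1 < U i ω}
  have hcover : {ω | ∀ i ∈ J, a < U i ω} = ⋃ L ∈ J.powerset, D L := by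
    ext ω
    simp only [D, Set.mem_ofPred_eq, Set.mem_iUnion, mem_powerset, mem_sdiff, exists_prop]
    constructor
    · intro h
      refine ⟨J.filter (a + 1 < U · ω), filter_subset _ _, fun i hi => ?_,
        fun i hi => (mem_filter.mp hi).2⟩
      have := h i hi.1
      simp only [mem_filter, hi.1, true_and] at hi
      omega
    · rintro ⟨L, hLJ, hJL, hL⟩ i hi
      by_cases hiL : i ∈ L
      · have := hL i hiL; omega
      · have := hJL i ⟨hi, hiL⟩; omega
  have hD : ∀ L ⊆ J, ∀ ω ∈ D L, J.filter (a + 1 < U · ω) = L := by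
    rintro L hLJ ω ⟨hJL, hL⟩
    ext i
    rw [mem_filter]
    refine ⟨fun ⟨hi, hlt⟩ => ?_, fun hi => ⟨hLJ hi, hL i hi⟩⟩
    by_contra hiL
    have := hJL i (mem_sdiff.mpr ⟨hi, hiL⟩)
    omega
  have hdisj : (J.powerset : Set (Finset ι)).PairwiseDisjoint D := by
    intro L hL L' hL' hne
    rw [mem_coe, mem_powerset] at hL hL'
    exact Set.disjoint_left.mpr fun ω h h' => hne ((hD L hL ω h).symm.trans (hD L' hL' ω h'))
  have hmeas : ∀ L, MeasurableSet (D L) := fun L =>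
    (measurableSet_of_dependsOn hUm (dependsOn_forall_mem (K := J \ L) (· = a + 1))).inter
      (measurableSet_of_dependsOn hUm (dependsOn_forall_mem (a + 1 < ·)))
  have hDJ : D J = {ω | ∀ i ∈ J, a + 1 < U i ω} := by ext; simp +contextual [D]
  have hgapOne : ∫ ω in D J, z ^ gapTime (fun i => U i ω) a J ∂μ
      = z * μ.real {ω | ∀ i ∈ J, a + 1 < U i ω} := by
    rw [setIntegral_congr_fun (hmeas J) (g := fun _ => z) fun ω hω => ?_, setIntegral_const,
      hDJ, smul_eq_mul, mul_comm]
    rw [hDJ] at hω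
    rw [gapTime_eq_one fun i hi => (hω i hi).ne', pow_one]
  rw [hcover, integral_biUnion_finset _ (fun L _ => hmeas L) hdisj
    fun L _ => (integrable_pow_gapTime hUm z a J).integrableOn,
    ← sum_erase_add _ _ (mem_powerset_self J), hgapOne, mul_add, mul_sum, add_comm]
  congr 1
  refine sum_congr rfl fun L hL => ?_
  exact setIntegral_pow_gapTime_of_ssubset hUm hindep z a (mem_ssubsets.mp hL)

end FirstStep

lemma Finset.sum_ssubsets_apply_card {α M : Type*} [DecidableEq α] [AddCancelCommMonoid M]
    (f : ℕ → M) (s : Finset α) :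
    ∑ t ∈ s.ssubsets, f t.card = ∑ k ∈ range s.card, s.card.choose k • f k := by
  have h := sum_powerset_apply_card f (x := s)
  rw [← sum_erase_add _ _ (mem_powerset_self s), sum_range_succ, Nat.choose_self, one_smul] at h
  exact add_right_cancel h

/-- The paper's `g_r(z)`. -/
noncomputable def gapPGF (p q z : ℝ) (r : ℕ) : ℝ :=
  z * (q ^ r + ∑ k : Fin r, (r.choose k : ℝ) * q ^ (k : ℕ) * p ^ (r - k) * gapPGF p q z k)
termination_by r
decreasing_by exact k.isLt

lemma gapPGF_eq (p q z : ℝ) (r : ℕ) :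
    gapPGF p q z r
      = z * (q ^ r + ∑ k ∈ range r, (r.choose k : ℝ) * q ^ k * p ^ (r - k) * gapPGF p q z k) := by
  rw [gapPGF,
    Fin.sum_univ_eq_sum_range (fun k => (r.choose k : ℝ) * q ^ k * p ^ (r - k) * gapPGF p q z k)]

section Geometric

variable {Ω ι : Type*} [MeasurableSpace Ω] {μ : Measure Ω} {p q : ℝ}

lemma measureReal_eq_of_geometric {V : Ω → ℕ} (hp : 0 ≤ p) (hq : 0 ≤ q)
    (hV : ∀ n, 1 ≤ n → μ {ω | V ω = n} = ENNReal.ofReal (p * q ^ (n - 1))) (a : ℕ) :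
    μ.real {ω | V ω = a + 1} = p * q ^ a := by
  rw [measureReal_def, hV (a + 1) (by omega), Nat.add_sub_cancel,
    ENNReal.toReal_ofReal (by positivity)]

lemma measureReal_lt_of_geometric [IsProbabilityMeasure μ] {V : Ω → ℕ} (hVm : Measurable V)
    (hp : 0 ≤ p) (hq : 0 ≤ q) (hpq : p + q = 1)
    (hV : ∀ n, 1 ≤ n → μ {ω | V ω = n} = ENNReal.ofReal (p * q ^ (n - 1)))
    (hV0 : μ {ω | V ω = 0} = 0) (a : ℕ) : μ.real {ω | a < V ω} = q ^ a := by
  induction a with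
  | zero =>
    have hcompl : {ω | 0 < V ω} = {ω | V ω = 0}ᶜ := by ext; simp [Nat.pos_iff_ne_zero]
    rw [hcompl, probReal_compl_eq_one_sub (measurableSet_eq_fun hVm measurable_const),
      measureReal_def, hV0, ENNReal.toReal_zero, sub_zero, pow_zero]
  | succ a ih =>
    have hsplit : {ω | a < V ω} = {ω | V ω = a + 1} ∪ {ω | a + 1 < V ω} := by
      ext; simp only [Set.mem_ofPred_eq, Set.mem_union]; omega
    have hdisj : Disjoint {ω | V ω = a + 1} {ω | a + 1 < V ω} :=
      Set.disjoint_left.mpr fun ω (h : V ω = a + 1) (h' : a + 1 < V ω) => by omega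
    rw [hsplit, measureReal_union hdisj (measurableSet_lt measurable_const hVm),
      measureReal_eq_of_geometric hp hq hV] at ih
    linear_combination ih - q ^ a * hpq

lemma setIntegral_pow_gapTime_eq_gapPGF [IsProbabilityMeasure μ] [DecidableEq ι] {U : ι → Ω → ℕ}
    (hUm : ∀ i, Measurable (U i)) (hindep : iIndepFun U μ) (hp : 0 ≤ p) (hq : 0 ≤ q)
    (hpq : p + q = 1) (hU : ∀ i n, 1 ≤ n → μ {ω | U i ω = n} = ENNReal.ofReal (p * q ^ (n - 1)))
    (hU0 : ∀ i, μ {ω | U i ω = 0} = 0) (z : ℝ) (J : Finset ι) (a : ℕ) :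
    ∫ ω in {ω | ∀ i ∈ J, a < U i ω}, z ^ gapTime (fun i => U i ω) a J ∂μ
      = q ^ (a * J.card) * gapPGF p q z J.card := by
  induction J using Finset.strongInduction generalizing a with
  | H J ih =>
  have hsilent : ∀ (b : ℕ) (K : Finset ι), μ.real {ω | ∀ i ∈ K, b < U i ω} = q ^ (b * K.card) :=
    fun b K => by
      refine (measureReal_forall_mem_eq_prod hindep K {n | b < n}).trans ?_
      simp only [Set.mem_ofPred_eq, measureReal_lt_of_geometric (hUm _) hp hq hpq (hU _) (hU0 _),
        prod_const, pow_mul]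
  have hanswer : ∀ K : Finset ι, μ.real {ω | ∀ i ∈ K, U i ω = a + 1} = (p * q ^ a) ^ K.card :=
    fun K => by
      refine (measureReal_forall_mem_eq_prod hindep K {a + 1}).trans ?_
      simp only [Set.mem_singleton_iff, measureReal_eq_of_geometric hp hq (hU _), prod_const]
  rw [setIntegral_pow_gapTime_eq hUm hindep, hsilent,
    sum_congr rfl fun L hL => by
      rw [hanswer, ih L (mem_ssubsets.mp hL), card_sdiff_of_subset (mem_ssubsets.mp hL).subset],
    sum_ssubsets_apply_card
      (fun k => (p * q ^ a) ^ (J.card - k) * (q ^ ((a + 1) * k) * gapPGF p q z k)),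
    gapPGF_eq]
  have hterm : ∀ k ∈ range J.card,
      J.card.choose k • ((p * q ^ a) ^ (J.card - k) * (q ^ ((a + 1) * k) * gapPGF p q z k))
        = q ^ (a * J.card) * ((J.card.choose k : ℝ) * q ^ k * p ^ (J.card - k) * gapPGF p q z k) :=
    fun k hk => by
      obtain ⟨d, hd⟩ := Nat.exists_eq_add_of_le (mem_range.mp hk).le
      rw [hd, Nat.add_sub_cancel_left, nsmul_eq_mul, mul_pow, ← pow_mul, mul_add, pow_add, add_mul,
        one_mul, pow_add]
      ring
  rw [sum_congr rfl hterm, ← mul_sum, add_mul, one_mul, pow_add]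
  ring

lemma integral_pow_gapTime_eq_gapPGF [IsProbabilityMeasure μ] [DecidableEq ι] {U : ι → Ω → ℕ}
    (hUm : ∀ i, Measurable (U i)) (hindep : iIndepFun U μ) (hp : 0 ≤ p) (hq : 0 ≤ q)
    (hpq : p + q = 1) (hU : ∀ i n, 1 ≤ n → μ {ω | U i ω = n} = ENNReal.ofReal (p * q ^ (n - 1)))
    (hU0 : ∀ i, μ {ω | U i ω = 0} = 0) (z : ℝ) (J : Finset ι) :
    ∫ ω, z ^ gapTime (fun i => U i ω) 0 J ∂μ = gapPGF p q z J.card := by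
  have hsilent : ∀ᵐ ω ∂μ, ω ∈ {ω | ∀ i ∈ J, 0 < U i ω} := by
    simp only [Set.mem_ofPred_eq, Filter.eventually_all_finset]
    intro i _
    simpa [ae_iff] using hU0 i
  rw [← Measure.restrict_eq_self_of_ae_mem hsilent,
    setIntegral_pow_gapTime_eq_gapPGF hUm hindep hp hq hpq hU hU0, zero_mul, pow_zero, one_mul]

end Geometric

section BinomialMixture

variable {R : Type*} [CommRing R]

/-- `E[f(N)]` for `N ~ Binomial(s, θ)`. -/
def binomialMixture (s : ℕ) (f : ℕ → R) (θ : R) : R :=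
  ∑ k ∈ range (s + 1), (s.choose k : R) * θ ^ k * (1 - θ) ^ (s - k) * f k

lemma binomialMixture_one_sub (s : ℕ) (f : ℕ → R) (θ : R) :
    binomialMixture s (fun k => 1 - f k) θ = 1 - binomialMixture s f θ := by
  have h1 : ∑ k ∈ range (s + 1), (s.choose k : R) * θ ^ k * (1 - θ) ^ (s - k) = 1 :=
    calc _ = (θ + (1 - θ)) ^ s := by
          rw [add_pow]
          exact sum_congr rfl fun k _ => by ring
      _ = 1 := by rw [add_sub_cancel, one_pow]
  simp only [binomialMixture, mul_sub, mul_one, sum_sub_distrib, h1]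

/-- Thinning: a `Binomial(r, q)` sample of a `Binomial(s, θ)` count is `Binomial(s, θ q)`. -/
lemma binomialMixture_binomialMixture (s : ℕ) (f : ℕ → R) (θ q : R) :
    binomialMixture s (fun r => binomialMixture r f q) θ = binomialMixture s f (θ * q) := by
  set F : ℕ → ℕ → R := fun k j => (s.choose k : R) * (θ * q) ^ k * f k *
    ((θ * (1 - q)) ^ j * (1 - θ) ^ (s - k - j) * ((s - k).choose j : R))
  have hchoose : ∀ k j, (s.choose (k + j) : R) * ((k + j).choose k : R)
      = s.choose k * (s - k).choose j := fun k j => by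
    rw [← Nat.cast_mul, ← Nat.cast_mul, Nat.choose_mul (Nat.le_add_right k j),
      Nat.add_sub_cancel_left]
  calc binomialMixture s (fun r => binomialMixture r f q) θ
      = ∑ r ∈ range (s + 1), ∑ k ∈ range (r + 1), F k (r - k) := by
        unfold binomialMixture
        refine sum_congr rfl fun r _ => ?_
        rw [mul_sum]
        refine sum_congr rfl fun k hk => ?_
        obtain ⟨j, rfl⟩ := Nat.exists_eq_add_of_le (mem_range_succ_iff.mp hk)
        simp only [F, Nat.add_sub_cancel_left, Nat.sub_sub, mul_pow]
        linear_combination (θ ^ (k + j) * (1 - θ) ^ (s - (k + j)) * q ^ k * (1 - q) ^ j * f k) *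
          hchoose k j
    _ = ∑ k ∈ range (s + 1), ∑ j ∈ range (s + 1 - k), F k j := sum_range_diag_flip _ F
    _ = binomialMixture s f (θ * q) := by
        refine sum_congr rfl fun k hk => ?_
        rw [← mul_sum, Nat.sub_add_comm (mem_range_succ_iff.mp hk), ← add_pow,
          show θ * (1 - q) + (1 - θ) = 1 - θ * q by ring]
        ring

end BinomialMixture

section FunctionalEquation

variable {K : Type*} [Field K]

lemma pow_mul_binomialMixture_div (s : ℕ) (f : ℕ → K) {x y : K} (h : x + y ≠ 0) :
    (x + y) ^ s * binomialMixture s f (x / (x + y))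
      = ∑ k ∈ range (s + 1), (s.choose k : K) * x ^ k * y ^ (s - k) * f k := by
  rw [binomialMixture, mul_sum]
  refine sum_congr rfl fun k hk => ?_
  rw [show 1 - x / (x + y) = y / (x + y) by field_simp; ring, div_pow, div_pow,
    ← Nat.add_sub_cancel' (mem_range_succ_iff.mp hk), pow_add, Nat.add_sub_cancel_left]
  field_simp

theorem binomialMixture_functional_equation {p q z : K} (hpq : p + q = 1) {g : ℕ → K}
    (hg : ∀ r, g r = z * (q ^ r + ∑ k ∈ range r, (r.choose k : K) * q ^ k * p ^ (r - k) * g k))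
    (s : ℕ) {θ : K} (hθ : 1 - θ * p ≠ 0) :
    binomialMixture s g θ = z * (binomialMixture s g (θ * q)
      + (1 - θ * p) ^ s * (1 - binomialMixture s g (θ * q / (1 - θ * p)))) := by
  have hp : p = 1 - q := by linear_combination hpq
  -- the `k = r` term missing from the recursion is `q ^ r * g r`
  have hstep : ∀ r, g r = z * (binomialMixture r g q + q ^ r * (1 - g r)) := fun r => by
    conv_lhs => rw [hg r]
    rw [binomialMixture, sum_range_succ, Nat.choose_self, Nat.sub_self, hp]
    ring
  have hrest : binomialMixture s (fun r => q ^ r * (1 - g r)) θ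
      = (1 - θ * p) ^ s * (1 - binomialMixture s g (θ * q / (1 - θ * p))) := by
    have hsum : θ * q + (1 - θ) = 1 - θ * p := by rw [hp]; ring
    rw [← hsum] at hθ ⊢
    rw [← binomialMixture_one_sub, pow_mul_binomialMixture_div s _ hθ, binomialMixture]
    exact sum_congr rfl fun k _ => by ring
  calc binomialMixture s g θ
      = binomialMixture s (fun r => z * (binomialMixture r g q + q ^ r * (1 - g r))) θ := by
        conv_lhs => rw [funext hstep]
    _ = z * (binomialMixture s (fun r => binomialMixture r g q) θ
          + binomialMixture s (fun r => q ^ r * (1 - g r)) θ) := by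
        simp only [binomialMixture]
        rw [← sum_add_distrib, mul_sum]
        exact sum_congr rfl fun k _ => by ring
    _ = _ := by rw [binomialMixture_binomialMixture, hrest]

end FunctionalEquation

theorem binomial_pgf_functional_equation_general
    {Ω : Type*} [MeasurableSpace Ω] (μ : Measure Ω) [IsProbabilityMeasure μ]
    (p : ℝ) (hp : 0 < p ∧ p < 1) (q : ℝ) (hq : q = 1 - p)
    (U : ℕ → Ω → ℕ) (hUm : ∀ s, Measurable (U s))
    (hindep : iIndepFun U μ)
    (hU : ∀ s, ∀ n, 1 ≤ n → μ {ω | U s ω = n} = ENNReal.ofReal (p * q ^ (n - 1)))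
    (hU0 : ∀ s, μ {ω | U s ω = 0} = 0)
    (X : ℕ → ℕ → Ω → ℕ)
    (hX : ∀ m n ω, X m n ω = ((Finset.range m).filter (fun s => U s ω = n)).card)
    (T : ℕ → Ω → ℕ) (hT : ∀ m ω, T m ω = sInf {n | 1 ≤ n ∧ X m n ω = 0})
    (z : ℝ)
    (g : ℕ → ℝ) (hg : ∀ m, g m = ∫ ω, z ^ (T m ω) ∂μ)
    (s : ℕ)
    (G : ℝ → ℝ)
    (hG : ∀ θ, G θ = ∑ k ∈ Finset.range (s + 1),
        (s.choose k : ℝ) * θ ^ k * (1 - θ) ^ (s - k) * g k)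
    (θ : ℝ) (hθ : 0 ≤ θ ∧ θ ≤ 1) :
    G θ = z * (G (θ * q) + (1 - θ * p) ^ s * (1 - G (θ * q / (1 - θ * p)))) := by
  have hpq : p + q = 1 := by rw [hq]; ring
  have hT' : ∀ m ω, T m ω = gapTime (fun i => U i ω) 0 (range m) := fun m ω => by
    simp [hT, hX, gapTime, filter_eq_empty_iff]
  have hg' : g = gapPGF p q z := funext fun m => by
    rw [hg, funext (hT' m), integral_pow_gapTime_eq_gapPGF hUm hindep hp.1.le (by linarith [hp.2])
      hpq hU hU0, card_range]
  have hθp : 1 - θ * p ≠ 0 := by nlinarith [mul_nonneg (sub_nonneg.mpr hθ.2) hp.1.le]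
  simp only [hG]
  exact binomialMixture_functional_equation hpq (hg' ▸ gapPGF_eq p q z) s hθp

/-- **Functional equation for the p.g.f. under a binomial prior.** Response times
`U 0, U 1, …` are i.i.d. `Geometric(p)` (`P(U s = n) = p q^{n-1}`, `q = 1 - p`).
For a pool of `m` clients put `X m n = #{s < m : U s = n}`,
`T m = min {n ≥ 1 : X m n = 0}` and `g m = E[z^{T m}]`.  For `θ ∈ [0,1]` the p.g.f. of
`T` under the `Binomial(s, θ)` prior is `G θ = ∑_{k=0}^s C(s,k) θ^k (1-θ)^{s-k} g k`,
and it satisfies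
`G θ = z (G (θ q) + (1 - θ p)^s (1 - G (θ q / (1 - θ p))))`. -/
theorem binomial_pgf_functional_equation
    {Ω : Type*} [MeasurableSpace Ω] (μ : Measure Ω) [IsProbabilityMeasure μ]
    (p : ℝ) (hp : 0 < p ∧ p < 1) (q : ℝ) (hq : q = 1 - p)
    (U : ℕ → Ω → ℕ) (hUm : ∀ s, Measurable (U s))
    (hindep : iIndepFun U μ)
    (hU : ∀ s, ∀ n, 1 ≤ n → μ {ω | U s ω = n} = ENNReal.ofReal (p * q ^ (n - 1)))
    (hU0 : ∀ s, μ {ω | U s ω = 0} = 0)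
    (X : ℕ → ℕ → Ω → ℕ)
    (hX : ∀ m n ω, X m n ω = ((Finset.range m).filter (fun s => U s ω = n)).card)
    (T : ℕ → Ω → ℕ) (hT : ∀ m ω, T m ω = sInf {n | 1 ≤ n ∧ X m n ω = 0})
    (z : ℝ) (hz : 0 ≤ z)
    (g : ℕ → ℝ) (hg : ∀ m, g m = ∫ ω, z ^ (T m ω) ∂μ)
    (s : ℕ)
    (G : ℝ → ℝ)
    (hG : ∀ θ, G θ = ∑ k ∈ Finset.range (s + 1),
        (s.choose k : ℝ) * θ ^ k * (1 - θ) ^ (s - k) * g k)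
    (θ : ℝ) (hθ : 0 ≤ θ ∧ θ ≤ 1) :
    G θ = z * (G (θ * q) + (1 - θ * p) ^ s * (1 - G (θ * q / (1 - θ * p)))) :=
  binomial_pgf_functional_equation_general μ p hp q hq U hUm hindep hU hU0 X hX T hT z g hg s G hG θ
    hθ
end

section
/- If U_1 ~ Geometric(p), the conditional p.g.f.s g_r(z) = E[z^T | S_0 = r] satisfy g_0(z) = z and, for s ≥ 1, g_s(z) = (z/(1 + z q^s)) {q^s + G_{s,q}(z)}, where G_{s,q}(z) = Σ_{k=0}^s C(s,k) q^k (1-q)^{s-k} g_k(z) and q = 1 - p. -/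
/-!
Condition on the set of clients that do not respond at time `1`. If that is everybody
(probability `q ^ s`), then `T = 1`. Otherwise, by memorylessness of the geometric law, the
`k` remaining clients start afresh one step later, so `T = 1 + T'` with `T'` distributed as `T`
for `k` clients. Hence `g s = z q^s + z ∑_{k<s} C(s,k) q^k p^(s-k) g k`, which is the claimed
identity once the term `k = s` is moved to the left.

To keep every expectation a finite sum, response times are capped at `M ≥ m + 2`: this does not
change `T`, which is at most `m + 1`, and the cap drops by one in each step of the recursion.
-/

open MeasureTheory ProbabilityTheory Finset

section FirstUnhit

variable {ι κ : Type*}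

noncomputable def firstUnhit (y : ι → ℕ) : ℕ := sInf {n | 1 ≤ n ∧ ∀ i, y i ≠ n}

theorem exists_unhit_le_card_add_one [Fintype ι] (y : ι → ℕ) :
    ∃ n, 1 ≤ n ∧ n ≤ Fintype.card ι + 1 ∧ ∀ i, y i ≠ n := by
  classical
  have hcard : (univ.image y).card < (Icc 1 (Fintype.card ι + 1)).card := by
    simpa using (card_image_le (s := univ) (f := y)).trans_lt (Nat.lt_succ_self _)
  obtain ⟨n, hn, hny⟩ := exists_mem_notMem_of_card_lt_card hcard
  rw [mem_Icc] at hn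
  exact ⟨n, hn.1, hn.2, fun i hi => hny (mem_image.2 ⟨i, mem_univ i, hi⟩)⟩

theorem firstUnhit_spec [Finite ι] (y : ι → ℕ) :
    1 ≤ firstUnhit y ∧ ∀ i, y i ≠ firstUnhit y := by
  have := Fintype.ofFinite ι
  obtain ⟨n, h1, -, h⟩ := exists_unhit_le_card_add_one y
  exact Nat.sInf_mem (s := {n | 1 ≤ n ∧ ∀ i, y i ≠ n}) ⟨n, h1, h⟩

theorem firstUnhit_le {y : ι → ℕ} {n : ℕ} (hn : 1 ≤ n) (h : ∀ i, y i ≠ n) :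
    firstUnhit y ≤ n :=
  Nat.sInf_le ⟨hn, h⟩

theorem firstUnhit_le_card_add_one [Fintype ι] (y : ι → ℕ) :
    firstUnhit y ≤ Fintype.card ι + 1 :=
  let ⟨_, h1, hle, h⟩ := exists_unhit_le_card_add_one y; (firstUnhit_le h1 h).trans hle

theorem firstUnhit_eq_one [Finite ι] {y : ι → ℕ} (h : ∀ i, y i ≠ 1) : firstUnhit y = 1 :=
  le_antisymm (firstUnhit_le le_rfl h) (firstUnhit_spec y).1

theorem firstUnhit_comp_equiv (e : κ ≃ ι) (y : ι → ℕ) :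
    firstUnhit (y ∘ e) = firstUnhit y := by
  simp only [firstUnhit, Function.comp_apply, e.forall_congr_left, Equiv.apply_symm_apply]

theorem firstUnhit_min [Fintype ι] {y : ι → ℕ} {M : ℕ} (hM : Fintype.card ι + 1 < M) :
    firstUnhit (fun i => min (y i) M) = firstUnhit y := by
  obtain ⟨h1, hy⟩ := firstUnhit_spec y
  obtain ⟨h1', hy'⟩ := firstUnhit_spec fun i => min (y i) M
  have hlt := (firstUnhit_le_card_add_one y).trans_lt hM
  have hlt' := (firstUnhit_le_card_add_one fun i => min (y i) M).trans_lt hM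
  refine le_antisymm (firstUnhit_le h1 fun i => ?_) (firstUnhit_le h1' fun i => ?_)
  · have := hy i; omega
  · have := hy' i; omega

def extendShift [DecidableEq ι] (s : Finset ι) (v : s → ℕ) (i : ι) : ℕ :=
  if h : i ∈ s then v ⟨i, h⟩ + 1 else 1

theorem firstUnhit_extendShift [Fintype ι] [DecidableEq ι] {s : Finset ι} (hs : s ≠ univ)
    (v : s → ℕ) :
    firstUnhit (extendShift s v) = firstUnhit v + 1 := by
  obtain ⟨i₀, hi₀⟩ : ∃ i, i ∉ s := by
    by_contra! h
    exact hs (eq_univ_iff_forall.2 h)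
  obtain ⟨h1, hv⟩ := firstUnhit_spec v
  obtain ⟨h1', hext⟩ := firstUnhit_spec (extendShift s v)
  have h2 : 2 ≤ firstUnhit (extendShift s v) := by
    have := hext i₀; simp only [extendShift, dif_neg hi₀] at this; omega
  refine le_antisymm (firstUnhit_le (by omega) fun i => ?_) ?_
  · unfold extendShift; split_ifs with h
    · have := hv ⟨i, h⟩; omega
    · omega
  · have : firstUnhit v ≤ firstUnhit (extendShift s v) - 1 := by
      refine firstUnhit_le (by omega) fun j => ?_
      have := hext j
      simp only [extendShift, dif_pos j.2, Subtype.coe_eta] at this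
      omega
    omega

end FirstUnhit

section CappedGeometric

variable {p q : ℝ}

/-- The law of `min U M` for `U` geometric on `{1, 2, …}`, on its support `Icc 1 M`. -/
def cappedGeomWeight (p q : ℝ) (M j : ℕ) : ℝ :=
  if j < M then p * q ^ (j - 1) else q ^ (M - 1)

theorem cappedGeomWeight_nonneg (hp : 0 ≤ p) (hq : 0 ≤ q) (M j : ℕ) :
    0 ≤ cappedGeomWeight p q M j := by
  unfold cappedGeomWeight; split_ifs <;> positivity

theorem sum_cappedGeomWeight (hpq : p + q = 1) {M : ℕ} (hM : 1 ≤ M) :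
    ∑ j ∈ Icc 1 M, cappedGeomWeight p q M j = 1 := by
  obtain ⟨N, rfl⟩ := Nat.exists_eq_add_of_le' hM
  have hgeom := mul_neg_geom_sum q N
  rw [← Ico_add_one_right_eq_Icc, sum_Ico_eq_sum_range, Nat.add_sub_cancel, sum_range_succ]
  have hbody : ∀ k ∈ range N, cappedGeomWeight p q (N + 1) (1 + k) = p * q ^ k :=
    fun k hk => by simp [cappedGeomWeight, mem_range.1 hk, add_comm 1 k]
  have htop : cappedGeomWeight p q (N + 1) (1 + N) = q ^ N := by
    simp [cappedGeomWeight, add_comm 1 N]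
  rw [sum_congr rfl hbody, ← mul_sum, htop]
  linear_combination hgeom + (∑ i ∈ range N, q ^ i) * hpq

theorem cappedGeomWeight_one {M : ℕ} (hM : 1 ≤ M) : cappedGeomWeight p q (M + 1) 1 = p := by
  simp [cappedGeomWeight, show 1 < M + 1 by omega]

theorem cappedGeomWeight_succ {M j : ℕ} (hM : 1 ≤ M) (hj : 1 ≤ j) :
    cappedGeomWeight p q (M + 1) (j + 1) = q * cappedGeomWeight p q M j := by
  obtain ⟨M, rfl⟩ := Nat.exists_eq_add_of_le' hM
  obtain ⟨j, rfl⟩ := Nat.exists_eq_add_of_le' hj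
  simp only [cappedGeomWeight, add_lt_add_iff_right]
  split_ifs <;> simp only [Nat.add_sub_cancel, pow_succ] <;> ring

end CappedGeometric

section CappedPgf

variable {p q z : ℝ} {ι κ : Type*} [Fintype ι] [DecidableEq ι] [Fintype κ] [DecidableEq κ]
  {M : ℕ}

/-- `E[z ^ T]` for the clients `ι` when their response times are capped at `M`. -/
noncomputable def cappedPgf (p q z : ℝ) (ι : Type*) [Fintype ι] [DecidableEq ι] (M : ℕ) :
    ℝ :=
  ∑ y ∈ Fintype.piFinset fun _ : ι => Icc 1 M,
    (∏ i, cappedGeomWeight p q M (y i)) * z ^ firstUnhit y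

theorem cappedPgf_congr (e : ι ≃ κ) :
    cappedPgf p q z ι M = cappedPgf p q z κ M := by
  refine sum_nbij' (fun y => y ∘ e.symm) (fun y => y ∘ e) ?_ ?_ ?_ ?_ ?_
  · simp only [Fintype.mem_piFinset]; exact fun y hy i => hy _
  · simp only [Fintype.mem_piFinset]; exact fun y hy i => hy _
  · simp [Function.comp_def]
  · simp [Function.comp_def]
  · intro y _
    rw [firstUnhit_comp_equiv, ← e.symm.prod_comp]
    rfl

theorem sum_prod_cappedGeomWeight (hpq : p + q = 1) (hM : 1 ≤ M) :
    ∑ y ∈ Fintype.piFinset (fun _ : ι => Icc 1 M), ∏ i, cappedGeomWeight p q M (y i)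
      = 1 := by
  simp [sum_prod_piFinset, sum_cappedGeomWeight hpq hM]

theorem prod_cappedGeomWeight_extendShift (hM : 1 ≤ M) (s : Finset ι) {v : s → ℕ}
    (hv : ∀ j, 1 ≤ v j) :
    ∏ i, cappedGeomWeight p q (M + 1) (extendShift s v i)
      = p ^ (Fintype.card ι - s.card) * q ^ s.card * ∏ j, cappedGeomWeight p q M (v j) := by
  have hin : ∀ j : s, cappedGeomWeight p q (M + 1) (extendShift s v j)
      = q * cappedGeomWeight p q M (v j) := fun j => by
    rw [extendShift, dif_pos j.2, Subtype.coe_eta, cappedGeomWeight_succ hM (hv j)]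
  have hout : ∀ i ∈ sᶜ, cappedGeomWeight p q (M + 1) (extendShift s v i) = p := fun i hi => by
    rw [extendShift, dif_neg (mem_compl.1 hi), cappedGeomWeight_one hM]
  rw [← prod_mul_prod_compl s, ← prod_coe_sort s, Fintype.prod_congr _ _ hin,
    prod_congr rfl hout, prod_mul_distrib, prod_const, prod_const, card_compl, card_univ,
    Fintype.card_coe]
  ring

theorem mem_piFinset_Icc_of_extendShift {s : Finset ι} {v : s → ℕ}
    (hv : v ∈ Fintype.piFinset fun _ => Icc 1 M) :
    extendShift s v ∈ {y ∈ Fintype.piFinset (fun _ : ι => Icc 1 (M + 1)) |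
      ({i | y i ≠ 1} : Finset ι) = s} := by
  simp only [Fintype.mem_piFinset, mem_Icc] at hv
  simp only [mem_filter, Fintype.mem_piFinset, mem_Icc]
  constructor
  · intro i
    unfold extendShift; split_ifs with h
    · have := hv ⟨i, h⟩; omega
    · omega
  · ext i
    rw [mem_filter]
    simp only [extendShift]
    split_ifs with h
    · have := hv ⟨i, h⟩; simp only [mem_univ, true_and, h, iff_true]; omega
    · simp [h]

/-- Split according to the set `s` of clients that do not respond at time `1`: shifted down by
one, their times are again capped geometric, now with cap `M`. -/
theorem sum_piFinset_Icc_succ (hM : 1 ≤ M) (F : (ι → ℕ) → ℝ) :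
    ∑ y ∈ Fintype.piFinset (fun _ : ι => Icc 1 (M + 1)),
        (∏ i, cappedGeomWeight p q (M + 1) (y i)) * F y
      = ∑ s : Finset ι, p ^ (Fintype.card ι - s.card) * q ^ s.card *
          ∑ v ∈ Fintype.piFinset (fun _ : s => Icc 1 M),
            (∏ j, cappedGeomWeight p q M (v j)) * F (extendShift s v) := by
  rw [← sum_fiberwise _ fun y => ({i | y i ≠ 1} : Finset ι)]
  refine sum_congr rfl fun s _ => ?_
  rw [mul_sum]
  symm
  refine sum_nbij' (extendShift s) (fun y j => y j - 1)
    (fun v hv => mem_piFinset_Icc_of_extendShift hv) ?_ ?_ ?_ ?_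
  · intro y hy
    simp only [mem_filter, Fintype.mem_piFinset, mem_Icc] at hy ⊢
    obtain ⟨hy, rfl⟩ := hy
    intro j
    have := hy j
    have := (mem_filter.1 j.2).2
    omega
  · intro v _
    ext j
    simp [extendShift]
  · intro y hy
    simp only [mem_filter, Fintype.mem_piFinset, mem_Icc] at hy
    obtain ⟨hy, rfl⟩ := hy
    ext i
    have := hy i
    by_cases h : y i = 1
    · simp [extendShift, h]
    · simp [extendShift, h]; omega
  · intro v hv
    rw [Fintype.mem_piFinset] at hv
    rw [prod_cappedGeomWeight_extendShift hM s fun j => (mem_Icc.1 (hv j)).1]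
    ring

theorem sum_pow_firstUnhit_extendShift (hpq : p + q = 1) (hM : 1 ≤ M) (s : Finset ι) :
    ∑ v ∈ Fintype.piFinset (fun _ : s => Icc 1 M),
        (∏ j, cappedGeomWeight p q M (v j)) * z ^ firstUnhit (extendShift s v)
      = z * if s = univ then 1 else cappedPgf p q z s M := by
  split_ifs with hs
  · subst hs
    have hone : ∀ v ∈ Fintype.piFinset (fun _ : (univ : Finset ι) => Icc 1 M),
        firstUnhit (extendShift univ v) = 1 := fun v hv => firstUnhit_eq_one fun i => by
      have := (mem_Icc.1 (Fintype.mem_piFinset.1 hv ⟨i, mem_univ i⟩)).1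
      simp only [extendShift, dif_pos (mem_univ i)]
      omega
    rw [sum_congr rfl fun v hv => by rw [hone v hv, pow_one], ← sum_mul,
      sum_prod_cappedGeomWeight hpq hM, one_mul, mul_one]
  · simp only [firstUnhit_extendShift hs, pow_succ, ← mul_assoc, ← sum_mul, cappedPgf]
    ring

theorem cappedPgf_succ (hpq : p + q = 1) (hM : 1 ≤ M) :
    cappedPgf p q z ι (M + 1) = z * q ^ Fintype.card ι + z * ∑ k ∈ range (Fintype.card ι),
      (Fintype.card ι).choose k * q ^ k * p ^ (Fintype.card ι - k) *
        cappedPgf p q z (Fin k) M := by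
  let f : ℕ → ℝ := fun k => p ^ (Fintype.card ι - k) * q ^ k *
    (z * if k = Fintype.card ι then 1 else cappedPgf p q z (Fin k) M)
  have hf : ∀ s : Finset ι, p ^ (Fintype.card ι - s.card) * q ^ s.card *
      (z * if s = univ then 1 else cappedPgf p q z s M) = f s.card := fun s => by
    simp only [f, ← card_eq_iff_eq_univ,
      cappedPgf_congr (Fintype.equivFinOfCardEq (Fintype.card_coe s))]
  rw [cappedPgf, sum_piFinset_Icc_succ hM]
  simp only [sum_pow_firstUnhit_extendShift hpq hM]
  rw [sum_congr rfl fun s _ => hf s, ← powerset_univ, sum_powerset_apply_card, card_univ,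
    sum_range_succ, mul_sum, add_comm]
  congr 1
  · simp [f, mul_comm]
  · refine sum_congr rfl fun k hk => ?_
    simp only [f, nsmul_eq_mul, if_neg (mem_range.1 hk).ne]
    ring

end CappedPgf

section Probability

variable {Ω : Type*} [MeasurableSpace Ω] {μ : Measure Ω} {p q : ℝ}

theorem integral_comp_eq_sum [IsFiniteMeasure μ] {α : Type*} [MeasurableSpace α]
    [MeasurableSingletonClass α] {Y : Ω → α} (hY : Measurable Y) {s : Finset α}
    (hs : ∀ᵐ ω ∂μ, Y ω ∈ s) (F : α → ℝ) :
    ∫ ω, F (Y ω) ∂μ = ∑ y ∈ s, μ.real (Y ⁻¹' {y}) * F y := by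
  have hF : (fun ω => F (Y ω)) =ᵐ[μ]
      fun ω => ∑ y ∈ s, (Y ⁻¹' {y}).indicator (fun _ => F y) ω := by
    filter_upwards [hs] with ω hω
    rw [sum_eq_single_of_mem (Y ω) hω fun y _ hy =>
      Set.indicator_of_notMem (fun h => hy h.symm) _,
      Set.indicator_of_mem (Set.mem_preimage.2 (Set.mem_singleton _))]
  rw [integral_congr_ae hF, integral_finsetSum _ fun y _ =>
    (integrable_const _).indicator (hY (measurableSet_singleton y))]
  simp only [integral_indicator_const _ (hY (measurableSet_singleton _)), smul_eq_mul]

variable [IsProbabilityMeasure μ] {V : Ω → ℕ}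

theorem measure_lt_eq_pow_of_geometric (hV : Measurable V) (hp : 0 ≤ p) (hq : 0 ≤ q)
    (hpq : p + q = 1)
    (hVpos : ∀ n, 1 ≤ n → μ {ω | V ω = n} = ENNReal.ofReal (p * q ^ (n - 1)))
    (hV0 : μ {ω | V ω = 0} = 0) (n : ℕ) : μ {ω | n < V ω} = ENNReal.ofReal (q ^ n) := by
  induction n with
  | zero =>
    have hcompl : {ω | 0 < V ω} = {ω | V ω = 0}ᶜ := by ext; simp [Nat.pos_iff_ne_zero]
    have hms : MeasurableSet {ω | V ω = 0} := hV (measurableSet_singleton 0)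
    rw [hcompl, measure_compl hms (measure_ne_top μ _), hV0]
    simp
  | succ n ih =>
    have hsplit : {ω | n < V ω} = {ω | V ω = n + 1} ∪ {ω | n + 1 < V ω} := by
      ext; simp only [Set.mem_ofPred_eq, Set.mem_union]; omega
    have hdisj : Disjoint {ω | V ω = n + 1} {ω | n + 1 < V ω} :=
      Set.disjoint_left.2 fun ω h1 h2 => by simp only [Set.mem_ofPred_eq] at h1 h2; omega
    have hpow : ENNReal.ofReal (q ^ n)
        = ENNReal.ofReal (p * q ^ n) + ENNReal.ofReal (q ^ (n + 1)) := by
      rw [← ENNReal.ofReal_add (by positivity) (by positivity)]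
      congr 1
      linear_combination (-(q ^ n)) * hpq
    rw [hsplit, measure_union hdisj (hV measurableSet_Ioi), hVpos (n + 1) n.succ_pos,
      Nat.add_sub_cancel, hpow] at ih
    exact (ENNReal.add_right_inj ENNReal.ofReal_ne_top).1 ih

theorem measure_min_eq_cappedGeomWeight (hV : Measurable V) (hp : 0 ≤ p) (hq : 0 ≤ q)
    (hpq : p + q = 1)
    (hVpos : ∀ n, 1 ≤ n → μ {ω | V ω = n} = ENNReal.ofReal (p * q ^ (n - 1)))
    (hV0 : μ {ω | V ω = 0} = 0) {M j : ℕ} (hj : j ∈ Icc 1 M) :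
    μ {ω | min (V ω) M = j} = ENNReal.ofReal (cappedGeomWeight p q M j) := by
  rw [mem_Icc] at hj
  rcases hj.2.lt_or_eq with hjM | rfl
  · have hset : {ω | min (V ω) M = j} = {ω | V ω = j} := by
      ext; simp only [Set.mem_ofPred_eq]; omega
    rw [hset, hVpos j hj.1, cappedGeomWeight, if_pos hjM]
  · have hset : {ω | min (V ω) j = j} = {ω | j - 1 < V ω} := by
      ext; simp only [Set.mem_ofPred_eq]; omega
    rw [hset, measure_lt_eq_pow_of_geometric hV hp hq hpq hVpos hV0, cappedGeomWeight,
      if_neg (lt_irrefl j)]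

variable {U : ℕ → Ω → ℕ}

theorem measureReal_min_eq_prod (hp : 0 ≤ p) (hq : 0 ≤ q) (hpq : p + q = 1)
    (hUm : ∀ s, Measurable (U s)) (hindep : iIndepFun U μ)
    (hU : ∀ s, ∀ n, 1 ≤ n → μ {ω | U s ω = n} = ENNReal.ofReal (p * q ^ (n - 1)))
    (hU0 : ∀ s, μ {ω | U s ω = 0} = 0) {m M : ℕ} {y : Fin m → ℕ}
    (hy : y ∈ Fintype.piFinset fun _ => Icc 1 M) :
    μ.real ((fun ω (i : Fin m) => min (U i ω) M) ⁻¹' {y})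
      = ∏ i, cappedGeomWeight p q M (y i) := by
  have hind : iIndepFun (fun (i : Fin m) ω => min (U i ω) M) μ :=
    (hindep.precomp Fin.val_injective).comp (fun _ x => min x M) fun _ => .of_discrete
  have hset : (fun ω (i : Fin m) => min (U i ω) M) ⁻¹' {y}
      = ⋂ i ∈ (univ : Finset (Fin m)), (fun ω => min (U i ω) M) ⁻¹' {y i} := by
    ext; simp [funext_iff]
  rw [measureReal_def, hset, hind.measure_inter_preimage_eq_mul univ
    fun _ _ => measurableSet_singleton _, ENNReal.toReal_prod]
  refine prod_congr rfl fun i _ => ?_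
  rw [← ENNReal.toReal_ofReal (cappedGeomWeight_nonneg hp hq M (y i)),
    ← measure_min_eq_cappedGeomWeight (hUm i) hp hq hpq (hU i) (hU0 i)
      (Fintype.mem_piFinset.1 hy i)]
  rfl

theorem integral_pow_firstUnhit (hp : 0 ≤ p) (hq : 0 ≤ q) (hpq : p + q = 1)
    (hUm : ∀ s, Measurable (U s)) (hindep : iIndepFun U μ)
    (hU : ∀ s, ∀ n, 1 ≤ n → μ {ω | U s ω = n} = ENNReal.ofReal (p * q ^ (n - 1)))
    (hU0 : ∀ s, μ {ω | U s ω = 0} = 0) (z : ℝ) {m M : ℕ} (hM : m + 2 ≤ M) :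
    ∫ ω, z ^ firstUnhit (fun i : Fin m => U i ω) ∂μ = cappedPgf p q z (Fin m) M := by
  have hY : Measurable fun ω (i : Fin m) => min (U i ω) M :=
    measurable_pi_lambda _ fun i => (hUm i).min measurable_const
  have hpos : ∀ᵐ ω ∂μ, ∀ i : Fin m, U i ω ≠ 0 :=
    ae_all_iff.2 fun i => measure_eq_zero_iff_ae_notMem.1 (hU0 i)
  have hs : ∀ᵐ ω ∂μ,
      (fun i : Fin m => min (U i ω) M) ∈ Fintype.piFinset fun _ => Icc 1 M := by
    filter_upwards [hpos] with ω hω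
    simp only [Fintype.mem_piFinset, mem_Icc]
    exact fun i => ⟨by have := hω i; omega, min_le_right _ _⟩
  have hcap : ∀ ω, firstUnhit (fun i : Fin m => U i ω)
      = firstUnhit fun i : Fin m => min (U i ω) M := fun ω =>
    (firstUnhit_min (by simp only [Fintype.card_fin]; omega)).symm
  simp_rw [hcap]
  rw [integral_comp_eq_sum hY hs fun y => z ^ firstUnhit y, cappedPgf]
  exact sum_congr rfl fun y hy => by
    rw [measureReal_min_eq_prod hp hq hpq hUm hindep hU hU0 hy]

end Probability

/-- **The `θ = 1` case of the binomial functional equation.** Response times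
`U 0, U 1, …` are i.i.d. `Geometric(p)` (`P(U s = n) = p q^{n-1}`, `q = 1 - p`).
For a pool of `m` clients put `X m n = #{s < m : U s = n}`,
`T m = min {n ≥ 1 : X m n = 0}` and `g m = E[z^{T m}]` (so `g m = E[z^T | S₀ = m]`).
Then `g 0 = z` and, for `s ≥ 1`,
`g s = (z / (1 + z q^s)) (q^s + G_{s,q}(z))` where
`G_{s,q}(z) = ∑_{k=0}^s C(s,k) q^k (1-q)^{s-k} g k`. -/
theorem pgf_theta_one_equation
    {Ω : Type*} [MeasurableSpace Ω] (μ : Measure Ω) [IsProbabilityMeasure μ]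
    (p : ℝ) (hp : 0 < p ∧ p < 1) (q : ℝ) (hq : q = 1 - p)
    (U : ℕ → Ω → ℕ) (hUm : ∀ s, Measurable (U s))
    (hindep : iIndepFun U μ)
    (hU : ∀ s, ∀ n, 1 ≤ n → μ {ω | U s ω = n} = ENNReal.ofReal (p * q ^ (n - 1)))
    (hU0 : ∀ s, μ {ω | U s ω = 0} = 0)
    (X : ℕ → ℕ → Ω → ℕ)
    (hX : ∀ m n ω, X m n ω = ((Finset.range m).filter (fun s => U s ω = n)).card)
    (T : ℕ → Ω → ℕ) (hT : ∀ m ω, T m ω = sInf {n | 1 ≤ n ∧ X m n ω = 0})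
    (z : ℝ) (hz : 0 ≤ z)
    (g : ℕ → ℝ) (hg : ∀ m, g m = ∫ ω, z ^ (T m ω) ∂μ) :
    g 0 = z ∧
      ∀ s : ℕ, 1 ≤ s →
        g s = (z / (1 + z * q ^ s))
          * (q ^ s + ∑ k ∈ Finset.range (s + 1),
              (s.choose k : ℝ) * q ^ k * (1 - q) ^ (s - k) * g k) := by
  have hp0 : 0 ≤ p := hp.1.le
  have hq0 : 0 ≤ q := by linarith [hp.2]
  have hpq : p + q = 1 := by rw [hq]; ring
  have hT' : ∀ m ω, T m ω = firstUnhit fun i : Fin m => U i ω := fun m ω => by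
    simp [hT, hX, firstUnhit, filter_eq_empty_iff, Fin.forall_iff]
  have hgM : ∀ m M, m + 2 ≤ M → g m = cappedPgf p q z (Fin m) M := fun m M hM => by
    simp only [hg, hT']
    exact integral_pow_firstUnhit hp0 hq0 hpq hUm hindep hU hU0 z hM
  have hrec : ∀ s,
      g s = z * q ^ s + z * ∑ k ∈ range s, s.choose k * q ^ k * p ^ (s - k) * g k := fun s => by
    rw [hgM s (s + 3) (by omega), cappedPgf_succ hpq (by omega : 1 ≤ s + 2), Fintype.card_fin]
    congr 2
    exact sum_congr rfl fun k hk => by rw [hgM k (s + 2) (by simp only [mem_range] at hk; omega)]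
  refine ⟨by simpa using hrec 0, fun s _ => ?_⟩
  have hden : 0 < 1 + z * q ^ s := by positivity
  rw [div_mul_eq_mul_div, eq_div_iff hden.ne', sum_range_succ, show 1 - q = p by linarith,
    Nat.choose_self, Nat.sub_self]
  linear_combination hrec s
end

section
/- If U_1 ~ Geometric(p) and S_0 ~ Binomial(s, θ), then E[Y] = sθ(1 - G_{s-1,θ}(q)), where q = 1 - p and G_{s-1,θ} is the p.g.f. of T for a Binomial(s-1, θ) prior. -/
/-!
Write `T(J)` for the least `n ≥ 1` at which no client of `J` responds. A client `t` of the pool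
`I` contributes to the yield iff `1 ≤ U t < T(I)`; since adding the single value `v = U t` to a
set of response times can only push its first gap beyond `v`, this is the same as
`1 ≤ U t ≤ T(I \ {t})`. The response time `U t` is independent of `S₀` and of `T(I \ {t})`, so
the geometric law turns this event into `P(S₀ = m) · E[1 - q ^ T(I \ {t})]`, and
`T(I \ {t})` is distributed as `T(m - 1)` because the response times are i.i.d. Summing over the
`m` clients of a pool of size `m` and using `m · C(s, m) = s · C(s - 1, m - 1)` gives the formula.
-/

open MeasureTheory ProbabilityTheory Finset

namespace Finset

noncomputable def firstGap (S : Finset ℕ) : ℕ := sInf {n | 1 ≤ n ∧ n ∉ S}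

variable {S : Finset ℕ} {n v : ℕ}

theorem exists_one_le_notMem (S : Finset ℕ) : ∃ n, 1 ≤ n ∧ n ∉ S :=
  ⟨S.sup id + 1, by omega, fun h => Nat.not_succ_le_self _ (le_sup (f := id) h)⟩

theorem one_le_firstGap_and_notMem (S : Finset ℕ) : 1 ≤ S.firstGap ∧ S.firstGap ∉ S :=
  Nat.sInf_mem S.exists_one_le_notMem

theorem firstGap_le (h1 : 1 ≤ n) (hn : n ∉ S) : S.firstGap ≤ n :=
  Nat.sInf_le ⟨h1, hn⟩

theorem lt_firstGap_insert_iff : v < (insert v S).firstGap ↔ v ≤ S.firstGap := by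
  obtain ⟨hg₁, hgS⟩ := S.one_le_firstGap_and_notMem
  obtain ⟨hg'₁, hg'S⟩ := (insert v S).one_le_firstGap_and_notMem
  rw [mem_insert, not_or] at hg'S
  constructor
  · intro hlt
    by_contra! hgv
    have := firstGap_le (S := insert v S) hg₁ (by simp [hgv.ne, hgS])
    omega
  · intro hle
    have := firstGap_le hg'₁ hg'S.2
    omega

theorem sum_card_filter_eq_card_filter_mem (I N : Finset ℕ) (u : ℕ → ℕ) :
    ∑ n ∈ N, #{t ∈ I | u t = n} = #{t ∈ I | u t ∈ N} := by
  rw [card_eq_sum_card_fiberwise (s := {t ∈ I | u t ∈ N}) (t := N)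
    fun t ht => (mem_filter.mp ht).2]
  refine sum_congr rfl fun n hn => congrArg card ?_
  rw [filter_filter]
  exact filter_congr fun t _ => ⟨fun h => ⟨h ▸ hn, h⟩, And.right⟩

theorem sum_card_filter_Ico_firstGap (I : Finset ℕ) (u : ℕ → ℕ) :
    ∑ n ∈ Ico 1 (I.image u).firstGap, #{t ∈ I | u t = n}
      = #{t ∈ I | u t ∈ Icc 1 ((I.erase t).image u).firstGap} := by
  rw [sum_card_filter_eq_card_filter_mem]
  refine congrArg card (filter_congr fun t ht => ?_)
  rw [mem_Ico, mem_Icc, ← insert_erase ht, image_insert, erase_insert_eq_erase, erase_idem]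
  exact and_congr_right fun _ => lt_firstGap_insert_iff

end Finset

section Probability

variable {Ω : Type*} [MeasurableSpace Ω] {μ : Measure Ω}

theorem ProbabilityTheory.iIndepFun.indepFun_of_factorsThrough {ι κ β γ : Type*}
    [Countable κ] [MeasurableSpace κ] [MeasurableSingletonClass κ]
    [MeasurableSpace β] [MeasurableSpace γ] {f : ι → Ω → κ} (h : iIndepFun f μ)
    (hf : ∀ i, Measurable (f i)) {S T : Finset ι} (hST : Disjoint S T) {g : Ω → β} {g' : Ω → γ}
    (hg : g.FactorsThrough fun ω (i : S) => f i ω)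
    (hg' : g'.FactorsThrough fun ω (i : T) => f i ω) : IndepFun g g' μ := by
  have := h.isProbabilityMeasure
  obtain ⟨ω₀⟩ := nonempty_of_isProbabilityMeasure μ
  convert (h.indepFun_finset S T hST hf).comp
    (measurable_of_countable (Function.extend (fun ω (i : S) => f i ω) g fun _ => g ω₀))
    (measurable_of_countable (Function.extend (fun ω (i : T) => f i ω) g' fun _ => g' ω₀))
    using 1
  · exact funext fun ω => (hg.extend_apply _ ω).symm
  · exact funext fun ω => (hg'.extend_apply _ ω).symm

theorem ProbabilityTheory.IndepFun.measure_mem_eq_lintegral {α β : Type*} [MeasurableSpace α]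
    [MeasurableSpace β] [IsFiniteMeasure μ] {X : Ω → α} {Y : Ω → β} (h : IndepFun X Y μ)
    (hX : Measurable X) (hY : Measurable Y) {A : Set (α × β)} (hA : MeasurableSet A) :
    μ {ω | (X ω, Y ω) ∈ A} = ∫⁻ ω, μ {ω' | (X ω', Y ω) ∈ A} ∂μ := by
  calc μ {ω | (X ω, Y ω) ∈ A} = μ.map (fun ω => (X ω, Y ω)) A :=
        (Measure.map_apply (hX.prodMk hY) hA).symm
    _ = ((μ.map X).prod (μ.map Y)) A := by
        rw [h.map_prod_eq_prod_map_map hX.aemeasurable hY.aemeasurable]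
    _ = ∫⁻ y, μ.map X ((fun x => (x, y)) ⁻¹' A) ∂(μ.map Y) := Measure.prod_apply_symm hA
    _ = ∫⁻ ω, μ.map X ((fun x => (x, Y ω)) ⁻¹' A) ∂μ :=
        lintegral_map (measurable_measure_prodMk_right hA) hY
    _ = ∫⁻ ω, μ {ω' | (X ω', Y ω) ∈ A} ∂μ := by
        congr 1
        funext ω
        exact Measure.map_apply hX (measurable_prodMk_right hA)

theorem sum_Icc_one_geometric {p q : ℝ} (hpq : p = 1 - q) (j : ℕ) :
    ∑ n ∈ Icc 1 j, p * q ^ (n - 1) = 1 - q ^ j := by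
  induction j with
  | zero => simp
  | succ j ih =>
    rw [sum_Icc_succ_top (by omega), ih, Nat.add_sub_cancel, hpq]
    ring

theorem measure_mem_Icc_one_of_geometric {V : Ω → ℕ} (hV : Measurable V) {p q : ℝ}
    (hp : 0 ≤ p) (hq : 0 ≤ q) (hpq : p = 1 - q)
    (hlaw : ∀ n, 1 ≤ n → μ {ω | V ω = n} = ENNReal.ofReal (p * q ^ (n - 1))) (j : ℕ) :
    μ {ω | V ω ∈ Icc 1 j} = ENNReal.ofReal (1 - q ^ j) := by
  rw [← sum_Icc_one_geometric hpq, ENNReal.ofReal_sum_of_nonneg fun n _ => by positivity]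
  change μ (V ⁻¹' ↑(Icc 1 j)) = _
  rw [← sum_measure_preimage_singleton _ fun n _ => hV (measurableSet_singleton n)]
  exact sum_congr rfl fun n hn => hlaw n (mem_Icc.mp hn).1

theorem measureReal_mem_Icc_one_of_indepFun [IsProbabilityMeasure μ] {V Y : Ω → ℕ}
    (hVY : IndepFun V Y μ) (hV : Measurable V) (hY : Measurable Y) {p q : ℝ}
    (hp : 0 ≤ p) (hq : 0 ≤ q) (hpq : p = 1 - q)
    (hlaw : ∀ n, 1 ≤ n → μ {ω | V ω = n} = ENNReal.ofReal (p * q ^ (n - 1))) :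
    μ.real {ω | V ω ∈ Icc 1 (Y ω)} = 1 - ∫ ω, q ^ Y ω ∂μ := by
  have hA : MeasurableSet {x : ℕ × ℕ | x.1 ∈ Icc 1 x.2} := (Set.to_countable _).measurableSet
  have hqY : ∀ ω, q ^ Y ω ≤ 1 := fun ω => pow_le_one₀ hq (by linarith)
  have hmeas : Measurable fun ω => q ^ Y ω := (measurable_of_countable _).comp hY
  have hint : Integrable (fun ω => q ^ Y ω) μ :=
    .of_bound hmeas.aestronglyMeasurable 1
      (ae_of_all _ fun ω => by rw [Real.norm_of_nonneg (by positivity)]; exact hqY ω)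
  calc μ.real {ω | V ω ∈ Icc 1 (Y ω)}
      = (∫⁻ ω, ENNReal.ofReal (1 - q ^ Y ω) ∂μ).toReal := by
        change (μ {ω | (V ω, Y ω) ∈ {x : ℕ × ℕ | x.1 ∈ Icc 1 x.2}}).toReal = _
        rw [hVY.measure_mem_eq_lintegral hV hY hA]
        exact congrArg _ (lintegral_congr fun ω =>
          measure_mem_Icc_one_of_geometric hV hp hq hpq hlaw (Y ω))
    _ = ∫ ω, (1 - q ^ Y ω) ∂μ :=
        (integral_eq_lintegral_of_nonneg_ae (ae_of_all _ fun ω => sub_nonneg.2 (hqY ω))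
          (measurable_const.sub hmeas).aestronglyMeasurable).symm
    _ = 1 - ∫ ω, q ^ Y ω ∂μ := by simp [integral_sub (integrable_const 1) hint]

theorem map_eq_map_of_forall_measure_eq {V W : Ω → ℕ} (hV : Measurable V) (hW : Measurable W)
    (h : ∀ n, μ {ω | V ω = n} = μ {ω | W ω = n}) : μ.map V = μ.map W :=
  Measure.ext_of_singleton fun n => by
    rw [Measure.map_apply hV (measurableSet_singleton n),
      Measure.map_apply hW (measurableSet_singleton n)]
    exact h n

theorem ae_le_of_measure_eq_zero {S0 : Ω → ℕ} {s : ℕ} (h : ∀ k, s < k → μ {ω | S0 ω = k} = 0) :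
    ∀ᵐ ω ∂μ, S0 ω ≤ s := by
  refine ae_iff.2 (measure_mono_null (t := ⋃ n : ℕ, {ω | S0 ω = s + 1 + n})
    (fun ω hω => Set.mem_iUnion.2 ⟨S0 ω - (s + 1), ?_⟩) (measure_iUnion_null fun n => h _ ?_))
  · have : s < S0 ω := not_le.1 hω
    show S0 ω = _
    omega
  · omega

theorem integral_sum_sum_indicator_one [IsFiniteMeasure μ] {ι κ : Type*} (I : Finset ι)
    (J : ι → Finset κ) {E : ι → κ → Set Ω} (hE : ∀ i j, MeasurableSet (E i j)) :
    ∫ ω, ∑ i ∈ I, ∑ j ∈ J i, (E i j).indicator (1 : Ω → ℝ) ω ∂μ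
      = ∑ i ∈ I, ∑ j ∈ J i, μ.real (E i j) := by
  have hint (i : ι) (j : κ) : Integrable ((E i j).indicator (1 : Ω → ℝ)) μ :=
    (integrable_const 1).indicator (hE i j)
  rw [integral_finsetSum _ fun i _ => integrable_finsetSum _ fun j _ => hint i j]
  refine sum_congr rfl fun i _ => ?_
  rw [integral_finsetSum _ fun j _ => hint i j]
  exact sum_congr rfl fun j _ => integral_indicator_one (hE i j)

end Probability

section FirstGapTime

variable {Ω : Type*} {S0 : Ω → ℕ} {U : ℕ → Ω → ℕ}

noncomputable def firstGapTime (U : ℕ → Ω → ℕ) (J : Finset ℕ) (ω : Ω) : ℕ :=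
  (J.image (U · ω)).firstGap

theorem firstGapTime_congr {J : Finset ℕ} {ω ω' : Ω} (h : ∀ r ∈ J, U r ω = U r ω') :
    firstGapTime U J ω = firstGapTime U J ω' := by
  rw [firstGapTime, firstGapTime, image_congr h]

theorem firstGapTime_eq_comp (U : ℕ → Ω → ℕ) (J : Finset ℕ) {k : ℕ} (hk : #J = k) :
    firstGapTime U J = (fun x : Fin k → ℕ => (univ.image x).firstGap) ∘
      fun ω i => U (J.orderEmbOfFin hk i) ω := by
  funext ω
  conv_lhs => rw [firstGapTime, ← image_orderEmbOfFin_univ J hk, image_image]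
  rfl

def yieldEvent (S0 : Ω → ℕ) (U : ℕ → Ω → ℕ) (m t : ℕ) : Set Ω :=
  {ω | S0 ω = m ∧ U t ω ∈ Icc 1 (firstGapTime U ((range m).erase t) ω)}

theorem sum_card_filter_eq_sum_indicator_yieldEvent {s : ℕ} {ω : Ω} (hω : S0 ω ≤ s) :
    ∑ n ∈ Ico 1 (firstGapTime U (range (S0 ω)) ω), #{t ∈ range (S0 ω) | U t ω = n}
      = ∑ m ∈ range (s + 1), ∑ t ∈ range m, (yieldEvent S0 U m t).indicator (1 : Ω → ℝ) ω := by
  rw [sum_eq_single_of_mem (S0 ω) (mem_range.2 (by omega)) fun m _ hm =>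
    sum_eq_zero fun t _ => Set.indicator_of_notMem (fun h => hm h.1.symm) _]
  rw [firstGapTime, sum_card_filter_Ico_firstGap, card_filter, Nat.cast_sum]
  refine sum_congr rfl fun t _ => ?_
  simp [yieldEvent, firstGapTime, Set.indicator_apply]

variable [MeasurableSpace Ω] {μ : Measure Ω}

theorem measurable_firstGapTime (hU : ∀ t, Measurable (U t)) (J : Finset ℕ) :
    Measurable (firstGapTime U J) := by
  rw [firstGapTime_eq_comp U J rfl]
  exact (measurable_of_countable _).comp (measurable_pi_lambda _ fun i => hU _)

theorem measurableSet_yieldEvent (hS0 : Measurable S0) (hU : ∀ t, Measurable (U t)) (m t : ℕ) :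
    MeasurableSet (yieldEvent S0 U m t) :=
  (hS0 (measurableSet_singleton m)).inter <| ((hU t).prodMk (measurable_firstGapTime hU _))
    (Set.to_countable {x : ℕ × ℕ | x.1 ∈ Icc 1 x.2}).measurableSet

theorem map_firstGapTime (hind : iIndepFun U μ) (hU : ∀ t, Measurable (U t)) {ν : Measure ℕ}
    (hlaw : ∀ t, μ.map (U t) = ν) {J : Finset ℕ} {k : ℕ} (hk : #J = k) :
    μ.map (firstGapTime U J)
      = (Measure.pi fun _ : Fin k => ν).map fun x => (univ.image x).firstGap := by
  rw [firstGapTime_eq_comp U J hk, ← Measure.map_map (measurable_of_countable _)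
    (measurable_pi_lambda _ fun i => hU _),
    (hind.precomp (J.orderEmbOfFin hk).injective).map_fun_eq_pi_map fun i => (hU _).aemeasurable]
  simp only [hlaw]

theorem identDistrib_firstGapTime (hind : iIndepFun U μ) (hU : ∀ t, Measurable (U t))
    {ν : Measure ℕ} (hlaw : ∀ t, μ.map (U t) = ν) {J K : Finset ℕ} (h : #J = #K) :
    IdentDistrib (firstGapTime U J) (firstGapTime U K) μ μ where
  aemeasurable_fst := (measurable_firstGapTime hU J).aemeasurable
  aemeasurable_snd := (measurable_firstGapTime hU K).aemeasurable
  map_eq := by rw [map_firstGapTime hind hU hlaw h, map_firstGapTime hind hU hlaw rfl]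

variable (hindep : iIndepFun (fun o : Option ℕ => o.elim S0 U) μ)
  (hS0 : Measurable S0) (hU : ∀ t, Measurable (U t))
include hindep hS0 hU

theorem indepFun_firstGapTime {t : ℕ} {J : Finset ℕ} (ht : t ∉ J) :
    IndepFun (U t) (firstGapTime U J) μ := by
  refine hindep.indepFun_of_factorsThrough (S := {some t}) (T := J.image some)
    (fun o => o.rec hS0 hU) (disjoint_singleton_left.mpr (by simpa using ht)) ?_ ?_
  · exact fun a b heq => congrFun heq ⟨some t, mem_singleton_self _⟩
  · exact fun a b heq =>
      firstGapTime_congr fun r hr => congrFun heq ⟨some r, mem_image_of_mem _ hr⟩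

theorem indepFun_prodMk_firstGapTime (t : ℕ) (J : Finset ℕ) :
    IndepFun S0 (fun ω => (U t ω, firstGapTime U J ω)) μ := by
  refine hindep.indepFun_of_factorsThrough (S := {none}) (T := (insert t J).image some)
    (fun o => o.rec hS0 hU) (disjoint_singleton_left.mpr (by simp)) ?_ ?_
  · exact fun a b heq => congrFun heq ⟨none, mem_singleton_self _⟩
  · intro a b heq
    have hab : ∀ r ∈ insert t J, U r a = U r b :=
      fun r hr => congrFun heq ⟨some r, mem_image_of_mem _ hr⟩
    exact Prod.ext (hab t (mem_insert_self t J))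
      (firstGapTime_congr fun r hr => hab r (mem_insert_of_mem hr))

theorem measureReal_yieldEvent [IsProbabilityMeasure μ] {p q : ℝ}
    (hp : 0 ≤ p) (hq : 0 ≤ q) (hpq : p = 1 - q)
    (hgeom : ∀ t n, 1 ≤ n → μ {ω | U t ω = n} = ENNReal.ofReal (p * q ^ (n - 1)))
    {ν : Measure ℕ} (hlaw : ∀ t, μ.map (U t) = ν) {m t : ℕ} (ht : t < m) :
    μ.real (yieldEvent S0 U m t)
      = μ.real {ω | S0 ω = m} * (1 - ∫ ω, q ^ firstGapTime U (range (m - 1)) ω ∂μ) := by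
  set J := (range m).erase t
  have hJ : #J = #(range (m - 1)) := by simp [J, card_erase_of_mem (mem_range.2 ht)]
  have hA : MeasurableSet {x : ℕ × ℕ | x.1 ∈ Icc 1 x.2} := (Set.to_countable _).measurableSet
  have hsplit := (indepFun_prodMk_firstGapTime hindep hS0 hU t J).measure_inter_preimage_eq_mul
    _ _ (measurableSet_singleton m) hA
  have hind : iIndepFun U μ := hindep.precomp (g := some) (Option.some_injective ℕ)
  have hsame : ∫ ω, q ^ firstGapTime U J ω ∂μ = ∫ ω, q ^ firstGapTime U (range (m - 1)) ω ∂μ :=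
    ((identDistrib_firstGapTime hind hU hlaw hJ).comp
      (measurable_of_countable (q ^ ·))).integral_eq
  rw [← hsame, ← measureReal_mem_Icc_one_of_indepFun
    (indepFun_firstGapTime hindep hS0 hU (notMem_erase t _)) (hU t)
    (measurable_firstGapTime hU J) hp hq hpq (hgeom t)]
  exact congrArg ENNReal.toReal hsplit |>.trans (ENNReal.toReal_mul ..)

end FirstGapTime

theorem sum_range_mul_binomial_mul_one_sub (s : ℕ) (θ : ℝ) (a : ℕ → ℝ) :
    ∑ m ∈ range (s + 1),
        (m : ℝ) * (s.choose m * θ ^ m * (1 - θ) ^ (s - m)) * (1 - a (m - 1))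
      = s * θ * (1 - ∑ k ∈ range s,
          ((s - 1).choose k : ℝ) * θ ^ k * (1 - θ) ^ (s - 1 - k) * a k) := by
  cases s with
  | zero => simp
  | succ n =>
    have hbin : ∑ k ∈ range (n + 1), (n.choose k : ℝ) * θ ^ k * (1 - θ) ^ (n - k) = 1 :=
      calc _ = (θ + (1 - θ)) ^ n := by rw [add_pow]; exact sum_congr rfl fun k _ => by ring
        _ = 1 := by rw [add_sub_cancel, one_pow]
    have hchoose (k : ℕ) : ((k + 1 : ℕ) : ℝ) * (n + 1).choose (k + 1) = (n + 1) * n.choose k := by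
      exact_mod_cast (mul_comm _ _).trans (Nat.add_one_mul_choose_eq n k).symm
    have hone_sub : 1 - ∑ k ∈ range (n + 1),
          (n.choose k : ℝ) * θ ^ k * (1 - θ) ^ (n - k) * a k
        = ∑ k ∈ range (n + 1), (n.choose k : ℝ) * θ ^ k * (1 - θ) ^ (n - k) * (1 - a k) := by
      simp only [mul_sub, mul_one, sum_sub_distrib, hbin]
    rw [sum_range_succ', Nat.add_sub_cancel, hone_sub, mul_sum]
    simp only [Nat.cast_zero, zero_mul, add_zero, Nat.add_sub_cancel, Nat.add_sub_add_right]
    refine sum_congr rfl fun k _ => ?_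
    rw [pow_succ, ← mul_assoc, ← mul_assoc, hchoose]
    push_cast
    ring

theorem expected_yield_binomial_prior_general
    {Ω : Type*} [MeasurableSpace Ω] (μ : Measure Ω) [IsProbabilityMeasure μ]
    (p : ℝ) (hp : 0 < p ∧ p < 1) (q : ℝ) (hq : q = 1 - p)
    (s : ℕ) (θ : ℝ) (hθ : 0 ≤ θ ∧ θ ≤ 1)
    (S0 : Ω → ℕ) (U : ℕ → Ω → ℕ)
    (hS0m : Measurable S0) (hUm : ∀ t, Measurable (U t))
    (hindep : iIndepFun (fun o : Option ℕ => o.elim S0 U) μ)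
    (hS0 : ∀ k : ℕ, μ {ω | S0 ω = k}
        = ENNReal.ofReal ((s.choose k : ℝ) * θ ^ k * (1 - θ) ^ (s - k)))
    (hU : ∀ t, ∀ n, 1 ≤ n → μ {ω | U t ω = n} = ENNReal.ofReal (p * q ^ (n - 1)))
    (hU0 : ∀ t, μ {ω | U t ω = 0} = 0)
    (X : ℕ → ℕ → Ω → ℕ)
    (hX : ∀ m n ω, X m n ω = ((Finset.range m).filter (fun t => U t ω = n)).card)
    (T : ℕ → Ω → ℕ) (hT : ∀ m ω, T m ω = sInf {n | 1 ≤ n ∧ X m n ω = 0})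
    (Y : Ω → ℕ)
    (hY : ∀ ω, Y ω = ∑ n ∈ Finset.Ico 1 (T (S0 ω) ω), X (S0 ω) n ω) :
    ∫ ω, (Y ω : ℝ) ∂μ
      = s * θ * (1 - ∑ k ∈ Finset.range s,
          ((s - 1).choose k : ℝ) * θ ^ k * (1 - θ) ^ (s - 1 - k)
            * ∫ ω, q ^ (T k ω) ∂μ) := by
  have hT_eq : ∀ k, T k = firstGapTime U (range k) := fun k => funext fun ω => by
    simp [hT, hX, firstGapTime, Finset.firstGap, filter_eq_empty_iff]
  have hlaw (t : ℕ) : μ.map (U t) = μ.map (U 0) :=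
    map_eq_map_of_forall_measure_eq (hUm t) (hUm 0) fun
      | 0 => by rw [hU0, hU0]
      | n + 1 => by rw [hU t _ le_add_self, hU 0 _ le_add_self]
  have hS0_le : ∀ᵐ ω ∂μ, S0 ω ≤ s :=
    ae_le_of_measure_eq_zero fun k hk => by simp [hS0, Nat.choose_eq_zero_of_lt hk]
  have hYae : (fun ω => (Y ω : ℝ)) =ᵐ[μ]
      fun ω => ∑ m ∈ range (s + 1), ∑ t ∈ range m, (yieldEvent S0 U m t).indicator 1 ω := by
    filter_upwards [hS0_le] with ω hω
    simp only [hY, hT_eq, hX]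
    exact sum_card_filter_eq_sum_indicator_yieldEvent hω
  have hS0real (m : ℕ) : μ.real {ω | S0 ω = m} = s.choose m * θ ^ m * (1 - θ) ^ (s - m) := by
    rw [measureReal_def, hS0, ENNReal.toReal_ofReal]
    exact mul_nonneg (mul_nonneg (Nat.cast_nonneg _) (pow_nonneg hθ.1 _))
      (pow_nonneg (sub_nonneg.2 hθ.2) _)
  calc ∫ ω, (Y ω : ℝ) ∂μ
      = ∑ m ∈ range (s + 1), ∑ t ∈ range m, μ.real (yieldEvent S0 U m t) := by
        rw [integral_congr_ae hYae,
          integral_sum_sum_indicator_one _ _ (measurableSet_yieldEvent hS0m hUm)]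
    _ = ∑ m ∈ range (s + 1), (m : ℝ) * (s.choose m * θ ^ m * (1 - θ) ^ (s - m))
          * (1 - ∫ ω, q ^ firstGapTime U (range (m - 1)) ω ∂μ) := by
        refine sum_congr rfl fun m _ => ?_
        rw [sum_congr rfl fun t ht => measureReal_yieldEvent hindep hS0m hUm hp.1.le
          (by linarith) (by linarith) hU hlaw (mem_range.1 ht), sum_const, card_range,
          nsmul_eq_mul, hS0real]
        ring
    _ = _ := by
        rw [sum_range_mul_binomial_mul_one_sub s θ fun k => ∫ ω, q ^ firstGapTime U (range k) ω ∂μ]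
        simp only [hT_eq]

/-- **Expected yield under a binomial prior, geometric case.** Response times
`U 0, U 1, …` are i.i.d. `Geometric(p)` (`P(U s = n) = p q^{n-1}`, `q = 1 - p`),
independent of the pool size `S₀ ~ Binomial(s, θ)`.  For a pool of `m` clients,
`X m n = #{t < m : U t = n}` and `T m = min {n ≥ 1 : X m n = 0}`; the realized stopping
time is `T S₀` and the total yield is `Y = ∑_{n=1}^{T S₀ - 1} X S₀ n`.  Then
`E[Y] = s θ (1 - G_{s-1,θ}(q))`, where
`G_{s-1,θ}(q) = ∑_{k=0}^{s-1} C(s-1,k) θ^k (1-θ)^{s-1-k} E[q^{T k}]`. -/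
theorem expected_yield_binomial_prior
    {Ω : Type*} [MeasurableSpace Ω] (μ : Measure Ω) [IsProbabilityMeasure μ]
    (p : ℝ) (hp : 0 < p ∧ p < 1) (q : ℝ) (hq : q = 1 - p)
    (s : ℕ) (hs : 1 ≤ s) (θ : ℝ) (hθ : 0 ≤ θ ∧ θ ≤ 1)
    (S0 : Ω → ℕ) (U : ℕ → Ω → ℕ)
    (hS0m : Measurable S0) (hUm : ∀ t, Measurable (U t))
    (hindep : iIndepFun (fun o : Option ℕ => o.elim S0 U) μ)
    (hS0 : ∀ k : ℕ, μ {ω | S0 ω = k}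
        = ENNReal.ofReal ((s.choose k : ℝ) * θ ^ k * (1 - θ) ^ (s - k)))
    (hU : ∀ t, ∀ n, 1 ≤ n → μ {ω | U t ω = n} = ENNReal.ofReal (p * q ^ (n - 1)))
    (hU0 : ∀ t, μ {ω | U t ω = 0} = 0)
    (X : ℕ → ℕ → Ω → ℕ)
    (hX : ∀ m n ω, X m n ω = ((Finset.range m).filter (fun t => U t ω = n)).card)
    (T : ℕ → Ω → ℕ) (hT : ∀ m ω, T m ω = sInf {n | 1 ≤ n ∧ X m n ω = 0})
    (Y : Ω → ℕ)
    (hY : ∀ ω, Y ω = ∑ n ∈ Finset.Ico 1 (T (S0 ω) ω), X (S0 ω) n ω) :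
    ∫ ω, (Y ω : ℝ) ∂μ
      = s * θ * (1 - ∑ k ∈ Finset.range s,
          ((s - 1).choose k : ℝ) * θ ^ k * (1 - θ) ^ (s - 1 - k)
            * ∫ ω, q ^ (T k ω) ∂μ) :=
  expected_yield_binomial_prior_general μ p hp q hq s θ hθ S0 U hS0m hUm hindep hS0 hU hU0 X hX T hT
    Y hY
end
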